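/- (Corollary 1.) Define α̂₀ : ℝ → ℝ by α̂₀(ρ) = Φ(ρ)·(1 − ρ·Φ(−ρ)/φ(ρ)). Then the derivative of α̂₀ at ρ = 0 equals (√(2/π) − √(π/2))/2, which is a negative absolute constant (approximately −0.2277) independent of all parameters of the model. -/

import Mathlib

open MeasureTheory ProbabilityTheory

/-- The standard normal density φ(t) = (2π)^{-1/2} e^{-t²/2}. -/
noncomputable def stdNormalPDF (t : ℝ) : ℝ :=
  (Real.sqrt (2 * Real.pi))⁻¹ * Real.exp (-t ^ 2 / 2)

/-- The standard normal distribution function Φ(x) = ∫_{-∞}^x φ(t) dt. -/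
noncomputable def stdNormalCDF (x : ℝ) : ℝ :=
  ∫ t in Set.Iic x, stdNormalPDF t

/-- The estimate α̂₀ of the optimal acceptance threshold as a function of the
adjusted mean ρ of the environment. -/
noncomputable def optThreshold (ρ : ℝ) : ℝ :=
  stdNormalCDF ρ * (1 - ρ * stdNormalCDF (-ρ) / stdNormalPDF ρ)

/-! Since φ is even, Φ(x) + Φ(-x) = 1, so Φ(0) = 1/2. With Φ' = φ and φ'(t) = -t φ(t),
differentiating α̂₀ = Φ · (1 - ρ Φ(-ρ)/φ) gives
α̂₀'(0) = φ(0) - Φ(0)²/φ(0) = 1/√(2π) - √(2π)/4, which is negative because π > 2. -/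

lemma stdNormalPDF_eq_gaussianPDFReal : stdNormalPDF = gaussianPDFReal 0 1 := by
  ext t
  simp [stdNormalPDF, gaussianPDFReal]

lemma stdNormalPDF_pos (t : ℝ) : 0 < stdNormalPDF t := by
  unfold stdNormalPDF
  positivity

lemma stdNormalPDF_neg (t : ℝ) : stdNormalPDF (-t) = stdNormalPDF t := by
  simp [stdNormalPDF]

lemma stdNormalPDF_zero : stdNormalPDF 0 = (Real.sqrt (2 * Real.pi))⁻¹ := by
  simp [stdNormalPDF]

lemma integrable_stdNormalPDF : Integrable stdNormalPDF := by
  rw [stdNormalPDF_eq_gaussianPDFReal]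
  exact integrable_gaussianPDFReal 0 1

lemma integral_stdNormalPDF : ∫ t, stdNormalPDF t = 1 := by
  rw [stdNormalPDF_eq_gaussianPDFReal]
  exact integral_gaussianPDFReal_eq_one 0 one_ne_zero

lemma stdNormalCDF_add_stdNormalCDF_neg (x : ℝ) :
    stdNormalCDF x + stdNormalCDF (-x) = 1 := by
  have hupper : stdNormalCDF (-x) = ∫ t in Set.Ioi x, stdNormalPDF t := by
    simp only [stdNormalCDF, ← integral_comp_neg_Ioi, stdNormalPDF_neg]
  rw [hupper, stdNormalCDF, intervalIntegral.integral_Iic_add_Ioi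
    integrable_stdNormalPDF.integrableOn integrable_stdNormalPDF.integrableOn,
    integral_stdNormalPDF]

lemma stdNormalCDF_zero : stdNormalCDF 0 = 1 / 2 := by
  linarith [neg_zero (G := ℝ) ▸ stdNormalCDF_add_stdNormalCDF_neg 0]

lemma hasDerivAt_stdNormalPDF (t : ℝ) :
    HasDerivAt stdNormalPDF (-t * stdNormalPDF t) t := by
  have hexponent : HasDerivAt (fun s : ℝ => -s ^ 2 / 2) (-t) t :=
    (((hasDerivAt_pow 2 t).fun_neg).div_const 2).congr_deriv (by ring)
  refine (hexponent.exp.const_mul _).congr_deriv ?_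
  simp only [stdNormalPDF]
  ring

lemma hasDerivAt_stdNormalCDF (x : ℝ) : HasDerivAt stdNormalCDF (stdNormalPDF x) x := by
  have hc : Continuous stdNormalPDF := by unfold stdNormalPDF; fun_prop
  have hsplit : ∀ y, stdNormalCDF y = stdNormalCDF 0 + ∫ t in (0 : ℝ)..y, stdNormalPDF t := by
    intro y
    rw [← intervalIntegral.integral_Iic_sub_Iic integrable_stdNormalPDF.integrableOn
      integrable_stdNormalPDF.integrableOn, stdNormalCDF, stdNormalCDF]
    ring
  rw [funext hsplit]
  exact (intervalIntegral.integral_hasDerivAt_right (hc.intervalIntegrable 0 x)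
    hc.aestronglyMeasurable.stronglyMeasurableAtFilter hc.continuousAt).const_add _

lemma hasDerivAt_optThreshold (ρ : ℝ) :
    HasDerivAt optThreshold
      (stdNormalPDF ρ - ρ * stdNormalCDF (-ρ)
        - stdNormalCDF ρ * ((1 + ρ ^ 2) * stdNormalCDF (-ρ) / stdNormalPDF ρ - ρ)) ρ := by
  have hΦneg : HasDerivAt (fun r => stdNormalCDF (-r)) (-stdNormalPDF ρ) ρ := by
    simpa [Function.comp_def, stdNormalPDF_neg] using
      (hasDerivAt_stdNormalCDF (-ρ)).comp ρ (hasDerivAt_neg ρ)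
  have hratio := ((hasDerivAt_id' ρ).fun_mul hΦneg).fun_div (hasDerivAt_stdNormalPDF ρ)
    (stdNormalPDF_pos ρ).ne'
  refine ((hasDerivAt_stdNormalCDF ρ).fun_mul (hratio.const_sub 1)).congr_deriv ?_
  have hφ := (stdNormalPDF_pos ρ).ne'
  field_simp
  ring

lemma inv_sqrt_two_mul_sub_sqrt_two_mul_div_four {a : ℝ} (ha : 0 < a) :
    (Real.sqrt (2 * a))⁻¹ - Real.sqrt (2 * a) / 4
      = (Real.sqrt (2 / a) - Real.sqrt (a / 2)) / 2 := by
  have h2a : Real.sqrt (2 * a) ^ 2 = 2 * a := Real.sq_sqrt (by positivity)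
  have e1 : Real.sqrt (2 / a) = 2 / Real.sqrt (2 * a) := by
    rw [Real.sqrt_eq_iff_mul_self_eq_of_pos (by positivity)]
    field_simp
    linear_combination (-1) * h2a
  have e2 : Real.sqrt (a / 2) = Real.sqrt (2 * a) / 2 := by
    rw [Real.sqrt_eq_iff_mul_self_eq_of_pos (by positivity)]
    linear_combination h2a / 4
  rw [e1, e2]
  field_simp
  ring

lemma sqrt_two_div_lt_sqrt_div_two {a : ℝ} (ha : 2 < a) :
    Real.sqrt (2 / a) < Real.sqrt (a / 2) := by
  apply Real.sqrt_lt_sqrt (by positivity)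
  rw [div_lt_div_iff₀ (by linarith) two_pos]
  nlinarith

/-- Corollary 1: the derivative of the estimated optimal acceptance threshold
at ρ = 0 equals (√(2/π) − √(π/2))/2, a negative absolute constant. -/
theorem deriv_optThreshold_at_zero :
    deriv optThreshold 0 = (Real.sqrt (2 / Real.pi) - Real.sqrt (Real.pi / 2)) / 2 ∧
      (Real.sqrt (2 / Real.pi) - Real.sqrt (Real.pi / 2)) / 2 < 0 := by
  refine ⟨?_, by linarith [sqrt_two_div_lt_sqrt_div_two (by linarith [Real.pi_gt_three])]⟩
  rw [(hasDerivAt_optThreshold 0).deriv, ← inv_sqrt_two_mul_sub_sqrt_two_mul_div_four Real.pi_pos]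
  simp only [neg_zero, stdNormalCDF_zero, stdNormalPDF_zero]
  field_simp
  ring
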